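/- arXiv:2303.01964 — 6 statements merged into one kernel-verified Lean document; each statement's English description precedes it below -/
import Mathlib

section
/- Let G_{n,x} (with 1 ≤ x ≤ n-2) be the graph obtained from K_{n-1} by adding a new vertex adjacent to exactly x vertices of K_{n-1}. Then N(G_{n,x}) = 2^{n-1} - 1 + 1 + 2^{n-1} - 2^{n-1-x} = 2^n - 2^{n-1-x}, and in particular N(G_{n,x}) is strictly increasing in x for 1 ≤ x ≤ n-2. -/
open SimpleGraph

/-- Number of nonempty vertex subsets inducing a connected subgraph. -/
noncomputable def numConnSub {V : Type*} [Fintype V] (G : SimpleGraph V) : ℕ :=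
  Set.ncard {S : Set V | S.Nonempty ∧ (G.induce S).Connected}

/-- Number of vertex subsets containing `u` inducing a connected subgraph. -/
noncomputable def numConnSubAt {V : Type*} [Fintype V] (G : SimpleGraph V) (u : V) : ℕ :=
  Set.ncard {S : Set V | u ∈ S ∧ (G.induce S).Connected}

/-- The graph `G_{n,x}` with `n = m + 1`: a complete graph on `Fin m` together with an extra
vertex `none` adjacent to exactly `x` of its vertices. -/
def Gnd (m x : ℕ) : SimpleGraph (Option (Fin m)) :=
  SimpleGraph.fromRel (fun a b =>
    match a, b with
    | some _, some _ => True
    | none, some i => i.val < x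
    | some i, none => i.val < x
    | none, none => False)

/-!
A nonempty vertex set that avoids the extra vertex `none`, or contains a neighbour `some j` of it,
induces a star around some centre and is therefore connected. The remaining nonempty sets,
`none` together with a nonempty set of its `m - x` non-neighbours, leave `none` isolated; there
are `2 ^ (m - x) - 1` of them among the `2 ^ (m + 1) - 1` nonempty sets.
-/

namespace SimpleGraph

variable {V : Type*} {G : SimpleGraph V} {S : Set V}

lemma induce_connected_of_forall_adj {v : V} (hv : v ∈ S)
    (hadj : ∀ w ∈ S, w ≠ v → G.Adj v w) : (G.induce S).Connected := by
  rw [connected_iff_exists_forall_reachable]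
  refine ⟨⟨v, hv⟩, fun ⟨w, hw⟩ => ?_⟩
  by_cases hwv : w = v
  · subst hwv
    rfl
  · exact Adj.reachable (hadj w hw hwv)

lemma not_induce_connected_of_forall_not_adj {v w : V} (hv : v ∈ S) (hw : w ∈ S) (hwv : w ≠ v)
    (hnadj : ∀ u ∈ S, ¬ G.Adj v u) : ¬ (G.induce S).Connected := by
  intro hconn
  have : Nontrivial S := ⟨⟨⟨v, hv⟩, ⟨w, hw⟩, fun h => hwv (congrArg Subtype.val h).symm⟩⟩
  obtain ⟨u, hu⟩ := hconn.preconnected.exists_adj_of_nontrivial ⟨v, hv⟩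
  exact hnadj u u.2 hu

end SimpleGraph

lemma Set.ncard_setOf_nonempty (V : Type*) [Finite V] :
    {S : Set V | S.Nonempty}.ncard = 2 ^ Nat.card V - 1 := by
  have : {S : Set V | S.Nonempty} = 𝒫 Set.univ \ {∅} := by
    ext S
    simp [Set.nonempty_iff_ne_empty]
  rw [this, Set.ncard_sdiff_singleton_of_mem (by simp), Set.ncard_powerset, Set.ncard_univ]

/-- `S ↦ some ⁻¹' S` is a bijection onto the nonempty subsets of `{a | p a}`. -/
lemma Option.ncard_setOf_none_mem_and_some_subset {α : Type*} [Finite α] (p : α → Prop) :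
    {S : Set (Option α) | none ∈ S ∧ (∃ a, some a ∈ S) ∧ ∀ a, some a ∈ S → p a}.ncard =
      2 ^ {a | p a}.ncard - 1 := by
  have himage : {S : Set (Option α) | none ∈ S ∧ (∃ a, some a ∈ S) ∧ ∀ a, some a ∈ S → p a} =
      (fun T => insert none (some '' T)) '' (𝒫 {a | p a} \ {∅}) := by
    ext S
    constructor
    · rintro ⟨hnone, ⟨a, ha⟩, hR⟩
      refine ⟨some ⁻¹' S, ⟨hR, Set.nonempty_iff_ne_empty.mp ⟨a, ha⟩⟩, ?_⟩
      ext (_ | b) <;> simp [hnone]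
    · rintro ⟨T, ⟨hTR, hT⟩, rfl⟩
      obtain ⟨a, ha⟩ := Set.nonempty_iff_ne_empty.mpr hT
      exact ⟨by simp, ⟨a, by simpa using ha⟩, fun b hb => hTR (by simpa using hb)⟩
  have hinj : Function.Injective fun T : Set α => insert none (some '' T) := by
    intro T T' h
    ext a
    simpa using congrArg (some a ∈ ·) h
  rw [himage, Set.ncard_image_of_injective _ hinj, Set.ncard_sdiff_singleton_of_mem (by simp),
    Set.ncard_powerset]

lemma Fin.ncard_setOf_le_val (m x : ℕ) : {i : Fin m | x ≤ i}.ncard = m - x := by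
  rw [← Set.ncard_image_of_injective _ Fin.val_injective, ← Set.ncard_Ico_nat]
  congr 1
  ext k
  constructor
  · rintro ⟨i, hi, rfl⟩
    exact ⟨hi, i.2⟩
  · rintro ⟨hk, hkm⟩
    exact ⟨⟨k, hkm⟩, hk, rfl⟩

namespace Gnd

variable {m x : ℕ}

lemma adj_some_some {i j : Fin m} : (Gnd m x).Adj (some i) (some j) ↔ i ≠ j := by
  simp [Gnd, fromRel_adj]

lemma adj_none_some {i : Fin m} : (Gnd m x).Adj none (some i) ↔ i.val < x := by
  simp [Gnd, fromRel_adj]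

lemma induce_connected_iff {S : Set (Option (Fin m))} (hS : S.Nonempty) :
    ((Gnd m x).induce S).Connected ↔
      ¬ (none ∈ S ∧ (∃ i : Fin m, some i ∈ S) ∧ ∀ i : Fin m, some i ∈ S → x ≤ i) := by
  constructor
  · rintro hconn ⟨hnone, ⟨i, hi⟩, hall⟩
    refine not_induce_connected_of_forall_not_adj hnone hi (by simp) ?_ hconn
    rintro (_ | j) hj hadj
    · exact (Gnd m x).irrefl hadj
    · have := hall j hj
      have := adj_none_some.mp hadj
      omega
  · intro hgood
    by_cases hnone : none ∈ S
    · by_cases hsome : ∃ i : Fin m, some i ∈ S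
      · push Not at hgood
        obtain ⟨j, hj, hjx⟩ := hgood hnone hsome
        refine induce_connected_of_forall_adj hj ?_
        rintro (_ | k) _ hkj
        · exact (adj_none_some.mpr hjx).symm
        · exact adj_some_some.mpr fun h => hkj (congrArg some h.symm)
      · refine induce_connected_of_forall_adj hnone ?_
        rintro (_ | k) hk hne
        · exact absurd rfl hne
        · exact absurd ⟨k, hk⟩ hsome
    · obtain ⟨_ | i, hi⟩ := hS
      · exact absurd hi hnone
      refine induce_connected_of_forall_adj hi ?_
      rintro (_ | k) hk hki
      · exact absurd hk hnone
      · exact adj_some_some.mpr fun h => hki (congrArg some h.symm)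

theorem numConnSub_eq (m x : ℕ) : numConnSub (Gnd m x) = 2 ^ (m + 1) - 2 ^ (m - x) := by
  have hset : {S : Set (Option (Fin m)) | S.Nonempty ∧ ((Gnd m x).induce S).Connected} =
      {S | S.Nonempty} \
        {S | none ∈ S ∧ (∃ i : Fin m, some i ∈ S) ∧ ∀ i : Fin m, some i ∈ S → x ≤ i} := by
    ext S
    exact and_congr_right induce_connected_iff
  rw [numConnSub, hset, Set.ncard_sdiff ?bad_subset, Set.ncard_setOf_nonempty,
    Option.ncard_setOf_none_mem_and_some_subset (fun i : Fin m => x ≤ i), Fin.ncard_setOf_le_val]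
  · have hpos : 1 ≤ 2 ^ (m - x) := Nat.one_le_two_pow
    have hle : 2 ^ (m - x) ≤ 2 ^ (m + 1) := Nat.pow_le_pow_right two_pos (by omega)
    simp only [Nat.card_eq_fintype_card, Fintype.card_option, Fintype.card_fin]
    omega
  · exact fun S hS => ⟨none, hS.1⟩

lemma strictMonoOn_numConnSub (m : ℕ) :
    StrictMonoOn (fun x => numConnSub (Gnd m x)) (Set.Iic m) := by
  intro x _ y hy hxy
  simp only [numConnSub_eq]
  have hle : 2 ^ (m - x) ≤ 2 ^ (m + 1) := Nat.pow_le_pow_right two_pos (by omega)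
  have hlt : 2 ^ (m - y) < 2 ^ (m - x) :=
    Nat.pow_lt_pow_right one_lt_two (by have := Set.mem_Iic.mp hy; omega)
  omega

end Gnd

/-- `N(G_{n,x}) = 2^n - 2^(n-1-x)`, and `N(G_{n,x})` is strictly increasing in `x`
for `1 ≤ x ≤ n - 2`. -/
theorem numConnSub_Gnd (n : ℕ) :
    (∀ x, 1 ≤ x → x ≤ n - 2 →
      numConnSub (Gnd (n - 1) x) = 2 ^ n - 2 ^ (n - 1 - x)) ∧
    (∀ x y, 1 ≤ x → x < y → y ≤ n - 2 →
      numConnSub (Gnd (n - 1) x) < numConnSub (Gnd (n - 1) y)) := by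
  refine ⟨fun x hx hxn => ?_, fun x y _ hxy hyn => ?_⟩
  · rw [Gnd.numConnSub_eq, Nat.sub_add_cancel (by omega)]
  · exact Gnd.strictMonoOn_numConnSub (n - 1)
      (Set.mem_Iic.mpr (by omega)) (Set.mem_Iic.mpr (by omega)) hxy
end

section
/- Let H_{n,α} be the join of K_{n-α} with an independent set of α vertices (every vertex of K_{n-α} adjacent to every one of the α independent vertices). If G has order n and independence number α and G is not isomorphic to H_{n,α}, then N(G) < N(H_{n,α}). -/
open SimpleGraph

/-- `H_{n,a}` with `n = m + a`: the join of a complete graph on `Fin m` with an independent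
set of `a` vertices. -/
def Hgraph (m a : ℕ) : SimpleGraph (Fin m ⊕ Fin a) :=
  SimpleGraph.fromRel (fun x y =>
    match x, y with
    | Sum.inr _, Sum.inr _ => False
    | _, _ => True)

/-- The independence number: the largest size of a set of pairwise nonadjacent vertices. -/
noncomputable def indepNum {V : Type*} [Fintype V] (G : SimpleGraph V) : ℕ :=
  sSup {k | ∃ s : Finset V, s.card = k ∧ ∀ a ∈ s, ∀ b ∈ s, ¬ G.Adj a b}

/-!
Fix an independent set `s` of `G` of size `α` and identify `V` with `Fin (n - α) ⊕ Fin α` so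
that `s` becomes the independent side of `H_{n,α}`. Every vertex outside `s` is universal in
`H_{n,α}`, while a connected set inside `s` is a single vertex; hence every connected set of `G`
stays connected in `H_{n,α}`. If `G` is not `H_{n,α}`, some pair `u ≠ v` with `u ∉ s` is a
non-edge of `G`, and `{u, v}` is connected in `H_{n,α}` but not in `G`, so the inequality is strict.
-/

namespace SimpleGraph

variable {V W : Type*} {G : SimpleGraph V} {H : SimpleGraph W}

lemma induce_connected_of_forall_adj_s5 {S : Set V} {u : V} (hu : u ∈ S)
    (h : ∀ v ∈ S, v ≠ u → G.Adj u v) : (G.induce S).Connected := by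
  refine (connected_iff_exists_forall_reachable _).2 ⟨⟨u, hu⟩, fun ⟨v, hv⟩ => ?_⟩
  rcases eq_or_ne v u with rfl | hvu
  · rfl
  · exact Adj.reachable (h v hv hvu)

lemma Connected.exists_adj_of_induce {S : Set V} (hS : (G.induce S).Connected)
    (hnt : S.Nontrivial) {x : V} (hx : x ∈ S) : ∃ y ∈ S, G.Adj x y := by
  have := hnt.coe_sort
  obtain ⟨⟨y, hy⟩, hxy⟩ := hS.preconnected.exists_adj_of_nontrivial ⟨x, hx⟩
  exact ⟨y, hy, hxy⟩

lemma adj_of_induce_pair_connected {u v : V} (huv : u ≠ v)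
    (h : (G.induce {u, v}).Connected) : G.Adj u v := by
  obtain ⟨w, hw, huw⟩ := h.exists_adj_of_induce (Set.nontrivial_pair huv) (Set.mem_insert u _)
  rcases hw with rfl | rfl
  · exact absurd huw (G.loopless.irrefl _)
  · exact huw

lemma Connected.subsingleton_of_subset_isIndepSet {S s : Set V} (hS : (G.induce S).Connected)
    (hs : G.IsIndepSet s) (hSs : S ⊆ s) : S.Subsingleton := by
  by_contra hnt
  obtain ⟨x, hx⟩ := hS.nonempty
  obtain ⟨y, hy, hxy⟩ := hS.exists_adj_of_induce (Set.not_subsingleton_iff.1 hnt) hx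
  exact hs (hSs hx) (hSs hy) hxy.ne hxy

lemma induce_image_connected_of_isIndepSet {s : Set V} (hs : G.IsIndepSet s) {f : V → W}
    (hf : ∀ x ∉ s, ∀ y, f y ≠ f x → H.Adj (f x) (f y)) {S : Set V}
    (hS : (G.induce S).Connected) : (H.induce (f '' S)).Connected := by
  by_cases hSs : S ⊆ s
  · have := ((hS.subsingleton_of_subset_isIndepSet hs hSs).image f).coe_sort
    have := hS.nonempty.map (Set.imageFactorization f S)
    exact Connected.of_subsingleton
  · obtain ⟨x, hxS, hxs⟩ := Set.not_subset.1 hSs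
    refine induce_connected_of_forall_adj_s5 (Set.mem_image_of_mem f hxS) ?_
    rintro _ ⟨y, -, rfl⟩ hne
    exact hf x hxs y hne

end SimpleGraph

lemma numConnSub_lt_of_injective {V W : Type*} [Fintype V] [Fintype W] {G : SimpleGraph V}
    {H : SimpleGraph W} {f : V → W} (hf : Function.Injective f)
    (hconn : ∀ S : Set V, (G.induce S).Connected → (H.induce (f '' S)).Connected)
    {u v : V} (huv : u ≠ v) (hG : ¬ G.Adj u v) (hH : H.Adj (f u) (f v)) :
    numConnSub G < numConnSub H := by
  have hf' : Function.Injective (Set.image f) := Set.image_injective.2 hf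
  have hsub : Set.image f '' {S | S.Nonempty ∧ (G.induce S).Connected} ⊂
      {T | T.Nonempty ∧ (H.induce T).Connected} := by
    refine (Set.ssubset_iff_of_subset ?_).2 ⟨{f u, f v}, ?_, ?_⟩
    · rintro _ ⟨S, ⟨hne, hS⟩, rfl⟩
      exact ⟨hne.image f, hconn S hS⟩
    · exact ⟨Set.insert_nonempty _ _, induce_pair_connected_of_adj hH⟩
    · rintro ⟨S, ⟨-, hS⟩, hSuv⟩
      rw [← Set.image_pair, hf'.eq_iff] at hSuv
      exact hG (adj_of_induce_pair_connected huv (hSuv ▸ hS))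
  calc numConnSub G = (Set.image f '' {S | S.Nonempty ∧ (G.induce S).Connected}).ncard :=
        (Set.ncard_image_of_injective _ hf').symm
    _ < numConnSub H := Set.ncard_lt_ncard hsub (Set.toFinite _)

lemma Hgraph_adj {m a : ℕ} {x y : Fin m ⊕ Fin a} :
    (Hgraph m a).Adj x y ↔ x ≠ y ∧ (x.isLeft ∨ y.isLeft) := by
  rcases x with x | x <;> rcases y with y | y <;> simp [Hgraph]

lemma exists_isIndepSet_card_eq_indepNum {V : Type*} [Fintype V] (G : SimpleGraph V) :
    ∃ s : Finset V, s.card = _root_.indepNum G ∧ G.IsIndepSet (s : Set V) := by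
  obtain ⟨s, hcard, hs⟩ := Nat.sSup_mem (s := {k | ∃ s : Finset V, s.card = k ∧
      ∀ a ∈ s, ∀ b ∈ s, ¬ G.Adj a b}) ⟨0, ∅, by simp⟩
    ⟨Fintype.card V, fun k ⟨s, hs, _⟩ => hs ▸ s.card_le_univ⟩
  exact ⟨s, hcard, fun a ha b hb _ => hs a ha b hb⟩

lemma Finset.exists_equiv_sum_fin {V : Type*} [Fintype V] [DecidableEq V] (s : Finset V) :
    ∃ e : V ≃ Fin (Fintype.card V - s.card) ⊕ Fin s.card, ∀ x, (e x).isLeft ↔ x ∉ s := by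
  let eIn : {x // x ∈ s} ≃ Fin s.card := Fintype.equivFinOfCardEq (Fintype.card_coe s)
  let eOut : {x // x ∉ s} ≃ Fin (Fintype.card V - s.card) :=
    Fintype.equivFinOfCardEq (by rw [Fintype.card_subtype_compl, Fintype.card_coe])
  refine ⟨((Equiv.sumCompl (· ∈ s)).symm.trans (Equiv.sumComm _ _)).trans
    (Equiv.sumCongr eOut eIn), fun x => ?_⟩
  by_cases hx : x ∈ s <;> simp [Equiv.sumCompl, hx]

/-- Among graphs of order `n` with independence number `α`, the join `H_{n,α}` is the unique
maximiser of the number of connected induced subgraphs. -/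
theorem numConnSub_lt_of_indepNum {V : Type*} [Fintype V] (G : SimpleGraph V)
    (n α : ℕ) (hn : Fintype.card V = n) (hα : _root_.indepNum G = α)
    (hiso : IsEmpty (G ≃g Hgraph (n - α) α)) :
    numConnSub G < numConnSub (Hgraph (n - α) α) := by
  classical
  obtain ⟨s, hcard, hs⟩ := exists_isIndepSet_card_eq_indepNum G
  subst hn hα
  rw [← hcard] at hiso ⊢
  obtain ⟨e, he⟩ := s.exists_equiv_sum_fin
  have hadj : ∀ x y, (Hgraph _ _).Adj (e x) (e y) ↔ x ≠ y ∧ (x ∉ s ∨ y ∉ s) := by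
    intro x y
    rw [Hgraph_adj, ← he, ← he, e.injective.ne_iff]
  have hconn (S : Set V) (hS : (G.induce S).Connected) : ((Hgraph _ _).induce (e '' S)).Connected :=
    induce_image_connected_of_isIndepSet hs
      (fun x hx y hne => (hadj x y).2 ⟨fun h => hne (h ▸ rfl), Or.inl hx⟩) hS
  obtain ⟨u, v, huv, hG, hH⟩ : ∃ u v, u ≠ v ∧ ¬ G.Adj u v ∧ (Hgraph _ _).Adj (e u) (e v) := by
    by_contra! h
    refine hiso.false ⟨e, fun {x y} => ⟨fun hxy => ?_, fun hxy => ?_⟩⟩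
    · by_contra hG
      exact h x y ((hadj x y).1 hxy).1 hG hxy
    · refine (hadj x y).2 ⟨hxy.ne, ?_⟩
      by_contra! hxys
      exact hs hxys.1 hxys.2 hxy.ne hxy
  exact numConnSub_lt_of_injective e.injective hconn huv hG hH
end

section
/- Let G be a graph of order n with vertex cover number β, and let H_{n,n-β} be the join of K_{β} with an independent set of n-β vertices. If G is not isomorphic to H_{n,n-β}, then N(G) < N(H_{n,n-β}). -/
/-!
Relabel the vertices so that a minimum vertex cover `C` becomes the clique part of
`H_{n,n-β}`. Since every edge of `G` meets `C`, the relabelling is a bijective homomorphism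
`G →g H_{n,n-β}`, and homomorphisms map connected vertex sets to connected vertex sets. As `G` is
not isomorphic to `H_{n,n-β}`, some non-edge `uv` of `G` becomes an edge, and `{u, v}` is then a
connected set of `H_{n,n-β}` that is not the image of a connected set of `G`.
-/

open SimpleGraph

/-- The vertex cover number: the minimum size of a vertex set meeting every edge. -/
noncomputable def coverNum {V : Type*} [Fintype V] (G : SimpleGraph V) : ℕ :=
  sInf {k | ∃ s : Finset V, s.card = k ∧ ∀ a b, G.Adj a b → a ∈ s ∨ b ∈ s}

namespace SimpleGraph

variable {V W : Type*}

lemma Connected.induce_image {G : SimpleGraph V} {G' : SimpleGraph W} (φ : G →g G')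
    {S : Set V} (h : (G.induce S).Connected) : (G'.induce (φ '' S)).Connected := by
  refine h.map (induceHom φ (Set.mapsTo_image φ S)) ?_
  rintro ⟨_, x, hx, rfl⟩
  exact ⟨⟨x, hx⟩, rfl⟩

lemma induce_pair_connected_iff {G : SimpleGraph V} {u v : V} (huv : u ≠ v) :
    (G.induce {u, v}).Connected ↔ G.Adj u v := by
  refine ⟨fun h => ?_, induce_pair_connected_of_adj⟩
  obtain ⟨w⟩ := h.preconnected ⟨u, by simp⟩ ⟨v, by simp⟩
  cases w with
  | nil => exact absurd rfl huv
  | @cons _ x _ hx _ =>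
    have hux : G.Adj u x := hx
    rcases x.2 with hxu | hxv
    · exact absurd (hxu ▸ hux) G.irrefl
    · exact hxv ▸ hux

theorem numConnSub_lt_of_injective [Fintype V] [Fintype W] {G : SimpleGraph V}
    {G' : SimpleGraph W} (φ : G →g G') (hφ : Function.Injective φ)
    {u v : V} (huv : ¬ G.Adj u v) (hφuv : G'.Adj (φ u) (φ v)) :
    numConnSub G < numConnSub G' := by
  set A := {S : Set V | S.Nonempty ∧ (G.induce S).Connected}
  set B := {T : Set W | T.Nonempty ∧ (G'.induce T).Connected}
  have hpair : φ '' {u, v} ∈ B := by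
    rw [Set.image_pair]
    exact ⟨Set.insert_nonempty _ _, induce_pair_connected_of_adj hφuv⟩
  have hpair_notMem : φ '' {u, v} ∉ Set.image φ '' A := by
    rintro ⟨S, hS, hSuv⟩
    rw [Set.image_injective.mpr hφ hSuv] at hS
    exact huv <| (induce_pair_connected_iff fun h => hφuv.ne (congrArg φ h)).mp hS.2
  have hsub : Set.image φ '' A ⊂ B := by
    refine Set.ssubset_iff_of_subset ?_ |>.mpr ⟨_, hpair, hpair_notMem⟩
    rintro _ ⟨S, ⟨hne, hconn⟩, rfl⟩
    exact ⟨hne.image φ, hconn.induce_image φ⟩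
  calc numConnSub G = (Set.image φ '' A).ncard :=
        (Set.ncard_image_of_injective A (Set.image_injective.mpr hφ)).symm
    _ < numConnSub G' := Set.ncard_lt_ncard hsub

end SimpleGraph

lemma exists_finset_card_eq_coverNum {V : Type*} [Fintype V] (G : SimpleGraph V) :
    ∃ C : Finset V, C.card = coverNum G ∧ ∀ a b, G.Adj a b → a ∈ C ∨ b ∈ C := by
  refine Nat.sInf_mem (s := {k | ∃ C : Finset V, C.card = k ∧ _}) ?_
  exact ⟨_, Finset.univ, rfl, fun a _ _ => .inl (Finset.mem_univ a)⟩

lemma exists_equiv_sum_isLeft_iff_mem {V : Type*} [Fintype V] [DecidableEq V] (C : Finset V) :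
    ∃ e : V ≃ Fin C.card ⊕ Fin (Fintype.card V - C.card), ∀ x, (e x).isLeft ↔ x ∈ C := by
  have hC : Fintype.card {x // x ∈ C} = C.card := Fintype.card_coe C
  have hCc : Fintype.card {x // x ∉ C} = Fintype.card V - C.card := by
    rw [Fintype.card_subtype_compl, hC]
  refine ⟨(Equiv.sumCompl (· ∈ C)).symm.trans
    (Equiv.sumCongr (Fintype.equivFinOfCardEq hC) (Fintype.equivFinOfCardEq hCc)), fun x => ?_⟩
  by_cases hx : x ∈ C
  · simp [Equiv.sumCompl_symm_apply_of_pos hx, hx]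
  · simp [Equiv.sumCompl_symm_apply_of_neg hx, hx]

/-- Among graphs of order `n` with vertex cover number `β`, the join `H_{n,n-β}` of `K_β`
with `n - β` independent vertices is the unique maximiser of the number of connected
induced subgraphs. -/
theorem numConnSub_lt_of_coverNum {V : Type*} [Fintype V] (G : SimpleGraph V)
    (n β : ℕ) (hn : Fintype.card V = n) (hβ : coverNum G = β)
    (hiso : IsEmpty (G ≃g Hgraph β (n - β))) :
    numConnSub G < numConnSub (Hgraph β (n - β)) := by
  classical
  obtain ⟨C, hCβ, hC⟩ := exists_finset_card_eq_coverNum G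
  subst hn hβ
  rw [← hCβ] at hiso ⊢
  obtain ⟨e, he⟩ := exists_equiv_sum_isLeft_iff_mem C
  have hadj : ∀ {x y}, G.Adj x y → (Hgraph _ _).Adj (e x) (e y) := fun hxy =>
    Hgraph_adj.mpr ⟨e.injective.ne hxy.ne, by simpa only [he] using hC _ _ hxy⟩
  have hnot_iso : ¬ ∀ x y, (Hgraph _ _).Adj (e x) (e y) → G.Adj x y :=
    fun h => hiso.false ⟨e, ⟨h _ _, hadj⟩⟩
  push Not at hnot_iso
  obtain ⟨u, v, heuv, huv⟩ := hnot_iso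
  exact numConnSub_lt_of_injective ⟨e, hadj⟩ e.injective huv heuv
end

section
/- Let G be a complete l-partite graph of order n with partite sets A and B among its parts satisfying |B| < |A| - 1, and fix a ∈ A. Let G' be the complete l-partite graph obtained by moving one vertex from A to B (parts of sizes |A|-1 and |B|+1, others unchanged). Then N(G') - N(G) = 2^{|A|-1} - 2^{|B|} > 0. -/
open SimpleGraph

/-- The complete multipartite graph with parts indexed by `ι`, the part `i` having
vertex set `Fin (s i)`. -/
def completeMultipartite {ι : Type*} (s : ι → ℕ) : SimpleGraph (Σ i, Fin (s i)) :=
  { Adj := fun x y => x.1 ≠ y.1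
    symm := ⟨fun _ _ h => Ne.symm h⟩
    loopless := ⟨fun _ h => h rfl⟩ }

/-! In a complete multipartite graph a vertex set induces a connected subgraph iff it is a
single vertex or meets two parts. The nonempty sets meeting only one part are counted part by
part, which gives `N(G) = n + (2^n - 1) - ∑ᵢ (2^{|Vᵢ|} - 1)`: the part sizes enter only
through `∑ᵢ 2^{|Vᵢ|}`, and moving a vertex from `A` to `B` lowers that sum by
`2^{|A|-1} - 2^{|B|}`. -/

open SimpleGraph Set Function

theorem sum_comp_update_add {ι α M : Type*} [Fintype ι] [DecidableEq ι] [AddCommMonoid M]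
    (g : α → M) (s : ι → α) (i : ι) (a : α) :
    ∑ j, g (update s i a j) + g (s i) = ∑ j, g (s j) + g a := by
  rw [Fintype.sum_eq_add_sum_compl i, Fintype.sum_eq_add_sum_compl i (fun j => g (s j)),
    update_self, Finset.sum_congr rfl fun j hj => by
      rw [update_of_ne (by simpa using hj)]]
  abel

theorem sum_comp_update_update_add {ι α M : Type*} [Fintype ι] [DecidableEq ι]
    [AddCommMonoid M] (g : α → M) (s : ι → α) {i j : ι} (hij : i ≠ j) (a b : α) :
    ∑ k, g (update (update s i a) j b k) + g (s i) + g (s j) = ∑ k, g (s k) + g a + g b := by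
  have hi := sum_comp_update_add g s i a
  have hj := sum_comp_update_add g (update s i a) j b
  rw [update_of_ne hij.symm] at hj
  rw [add_right_comm, hj, add_assoc, add_comm (g b), ← add_assoc, hi]

namespace SimpleGraph

theorem completeMultipartiteGraph_induce_connected_iff {ι : Type*} {V : ι → Type*}
    {S : Set (Σ i, V i)} :
    ((completeMultipartiteGraph V).induce S).Connected ↔
      (∃ a, S = {a}) ∨ ∃ x ∈ S, ∃ y ∈ S, x.1 ≠ y.1 := by
  constructor
  · refine fun h => or_iff_not_imp_right.2 fun hS => ?_
    push Not at hS
    have hbot : (completeMultipartiteGraph V).induce S = ⊥ := by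
      ext x y
      simpa using hS x x.2 y y.2
    obtain ⟨hsub, ⟨a⟩⟩ := connected_bot_iff.1 (hbot ▸ h)
    exact ⟨a, (subsingleton_coe S).1 hsub |>.eq_singleton_of_mem a.2⟩
  · rintro (⟨a, rfl⟩ | ⟨x, hx, y, hy, hxy⟩)
    · exact .of_subsingleton
    · refine (connected_iff _).2 ⟨fun u v => ?_, ⟨⟨x, hx⟩⟩⟩
      by_cases huv : u.1.1 = v.1.1
      · obtain ⟨z, hz, hzu⟩ : ∃ z ∈ S, u.1.1 ≠ z.1 := by
          by_cases hxu : u.1.1 = x.1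
          · exact ⟨y, hy, hxu ▸ hxy⟩
          · exact ⟨x, hx, hxu⟩
        have huz : ((completeMultipartiteGraph V).induce S).Adj u ⟨z, hz⟩ := by simpa using hzu
        have hzv : ((completeMultipartiteGraph V).induce S).Adj ⟨z, hz⟩ v := by
          simpa [← huv] using Ne.symm hzu
        exact huz.reachable.trans hzv.reachable
      · exact Adj.reachable (by simpa using huv)

end SimpleGraph

theorem Set.ncard_setOf_nonempty_subset_add_one {α : Type*} {s : Set α} (hs : s.Finite) :
    {S | S.Nonempty ∧ S ⊆ s}.ncard + 1 = 2 ^ s.ncard := by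
  have : 𝒫 s = insert ∅ {S | S.Nonempty ∧ S ⊆ s} := by
    ext S
    by_cases hS : S.Nonempty <;> simp_all [nonempty_iff_ne_empty]
  rw [← ncard_powerset s hs, this, ncard_insert_of_notMem (by simp) (hs.powerset.subset ?_)]
  exact fun S hS => hS.2

section FiberCount

variable {α β : Type*} [Fintype α] [Fintype β] (f : α → β)

theorem ncard_setOf_nonempty_forall_eq_add_card :
    {S : Set α | S.Nonempty ∧ ∀ x ∈ S, ∀ y ∈ S, f x = f y}.ncard + Fintype.card β =
      ∑ b, 2 ^ (f ⁻¹' {b}).ncard := by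
  have hunion : {S : Set α | S.Nonempty ∧ ∀ x ∈ S, ∀ y ∈ S, f x = f y} =
      ⋃ b, {S | S.Nonempty ∧ S ⊆ f ⁻¹' {b}} := by
    ext S
    simp only [mem_ofPred_eq, mem_iUnion]
    constructor
    · rintro ⟨⟨x, hx⟩, hS⟩
      exact ⟨f x, ⟨x, hx⟩, fun y hy => hS y hy x hx⟩
    · rintro ⟨b, hne, hS⟩
      exact ⟨hne, fun x hx y hy => (hS hx).trans (hS hy).symm⟩
  have hdisj : Pairwise (Disjoint on fun b => {S : Set α | S.Nonempty ∧ S ⊆ f ⁻¹' {b}}) := by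
    refine fun b c hbc => disjoint_left.2 fun S hb hc => ?_
    obtain ⟨x, hx⟩ := hb.1
    exact hbc ((hb.2 hx).symm.trans (hc.2 hx))
  rw [hunion, ncard_iUnion_of_finite (fun _ => toFinite _) hdisj, finsum_eq_sum_of_fintype,
    Fintype.card_eq_sum_ones, ← Finset.sum_add_distrib]
  exact Finset.sum_congr rfl fun b _ => ncard_setOf_nonempty_subset_add_one (toFinite _)

theorem ncard_setOf_exists_ne_add_sum :
    {S : Set α | ∃ x ∈ S, ∃ y ∈ S, f x ≠ f y}.ncard + ∑ b, 2 ^ (f ⁻¹' {b}).ncard + 1 =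
      2 ^ Fintype.card α + Fintype.card β := by
  have hsplit := ncard_inter_add_ncard_sdiff_eq_ncard {S : Set α | S.Nonempty}
    {S | ∃ x ∈ S, ∃ y ∈ S, f x ≠ f y}
  have hmulti : {S : Set α | S.Nonempty} ∩ {S | ∃ x ∈ S, ∃ y ∈ S, f x ≠ f y} =
      {S | ∃ x ∈ S, ∃ y ∈ S, f x ≠ f y} :=
    inter_eq_right.2 fun S ⟨x, hx, _⟩ => ⟨x, hx⟩
  have hmono : {S : Set α | S.Nonempty} \ {S | ∃ x ∈ S, ∃ y ∈ S, f x ≠ f y} =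
      {S | S.Nonempty ∧ ∀ x ∈ S, ∀ y ∈ S, f x = f y} := by
    ext S
    simp
  have hall := ncard_setOf_nonempty_subset_add_one (toFinite (univ : Set α))
  simp only [subset_univ, and_true, ncard_univ, Nat.card_eq_fintype_card] at hall
  have := ncard_setOf_nonempty_forall_eq_add_card f
  rw [hmulti, hmono] at hsplit
  omega

end FiberCount

theorem numConnSub_completeMultipartiteGraph {ι : Type*} {V : ι → Type*} [Fintype ι]
    [∀ i, Fintype (V i)] :
    numConnSub (completeMultipartiteGraph V) =
      Fintype.card (Σ i, V i) + {S : Set (Σ i, V i) | ∃ x ∈ S, ∃ y ∈ S, x.1 ≠ y.1}.ncard := by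
  have hsets : {S : Set (Σ i, V i) |
      S.Nonempty ∧ ((completeMultipartiteGraph V).induce S).Connected} =
      range singleton ∪ {S | ∃ x ∈ S, ∃ y ∈ S, x.1 ≠ y.1} := by
    ext S
    simp only [mem_ofPred_eq, mem_union, mem_range, completeMultipartiteGraph_induce_connected_iff,
      eq_comm (a := S)]
    constructor
    · rintro ⟨-, h⟩
      exact h
    · rintro (⟨a, rfl⟩ | ⟨x, hx, y, hy, hxy⟩)
      · exact ⟨singleton_nonempty a, .inl ⟨a, rfl⟩⟩
      · exact ⟨⟨x, hx⟩, .inr ⟨x, hx, y, hy, hxy⟩⟩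
  have hdisj : Disjoint (range singleton) {S : Set (Σ i, V i) | ∃ x ∈ S, ∃ y ∈ S, x.1 ≠ y.1} := by
    refine disjoint_left.2 ?_
    rintro _ ⟨a, rfl⟩ ⟨x, rfl, y, rfl, hxy⟩
    exact hxy rfl
  rw [numConnSub, hsets, ncard_union_eq hdisj, ncard_range_of_injective singleton_injective,
    Nat.card_eq_fintype_card]

theorem numConnSub_completeMultipartiteGraph_add_sum_two_pow {ι : Type*} {V : ι → Type*}
    [Fintype ι] [∀ i, Fintype (V i)] :
    numConnSub (completeMultipartiteGraph V) + ∑ i, 2 ^ Fintype.card (V i) + 1 =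
      Fintype.card (Σ i, V i) + 2 ^ Fintype.card (Σ i, V i) + Fintype.card ι := by
  have hpart (i : ι) : (Sigma.fst ⁻¹' {i} : Set (Σ i, V i)).ncard = Fintype.card (V i) := by
    have : (Sigma.fst ⁻¹' {i} : Set (Σ i, V i)) = range (Sigma.mk i) := by
      ext ⟨j, v⟩
      simp [eq_comm]
    rw [this, ncard_range_of_injective sigma_mk_injective, Nat.card_eq_fintype_card]
  have := ncard_setOf_exists_ne_add_sum (Sigma.fst : (Σ i, V i) → ι)
  simp only [hpart] at this
  rw [numConnSub_completeMultipartiteGraph]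
  omega

theorem completeMultipartite_eq_completeMultipartiteGraph {ι : Type*} (s : ι → ℕ) :
    completeMultipartite s = completeMultipartiteGraph fun i => Fin (s i) :=
  rfl

theorem numConnSub_completeMultipartite_add_sum_two_pow {ι : Type*} [Fintype ι] (s : ι → ℕ) :
    numConnSub (completeMultipartite s) + ∑ i, 2 ^ s i + 1 =
      ∑ i, s i + 2 ^ ∑ i, s i + Fintype.card ι := by
  rw [completeMultipartite_eq_completeMultipartiteGraph]
  simpa only [Fintype.card_sigma, Fintype.card_fin] using
    numConnSub_completeMultipartiteGraph_add_sum_two_pow (V := fun i => Fin (s i))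

/-- Moving a vertex from a largest part `A` to a part `B` with `|B| < |A| - 1` of a complete
multipartite graph strictly increases the number of connected induced subgraphs, the increase
being exactly `2^(|A|-1) - 2^(|B|)`. -/
theorem numConnSub_completeMultipartite_shift {ι : Type*} [Fintype ι] [DecidableEq ι]
    (s : ι → ℕ) (iA iB : ι) (hne : iA ≠ iB) (hB : s iB < s iA - 1) :
    numConnSub (completeMultipartite
          (Function.update (Function.update s iA (s iA - 1)) iB (s iB + 1))) +
        2 ^ (s iB) =
      numConnSub (completeMultipartite s) + 2 ^ (s iA - 1) ∧
    numConnSub (completeMultipartite s) <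
      numConnSub (completeMultipartite
        (Function.update (Function.update s iA (s iA - 1)) iB (s iB + 1))) := by
  have hsum (g : ℕ → ℕ) := sum_comp_update_update_add g s hne (s iA - 1) (s iB + 1)
  have hcard := hsum id
  have hpow := hsum (2 ^ ·)
  simp only [id_eq, pow_succ] at hcard hpow
  have key := numConnSub_completeMultipartite_add_sum_two_pow s
  have key' := numConnSub_completeMultipartite_add_sum_two_pow
    (update (update s iA (s iA - 1)) iB (s iB + 1))
  rw [show ∑ k, update (update s iA (s iA - 1)) iB (s iB + 1) k = ∑ k, s k by omega] at key'
  have hpowA : 2 ^ s iA = 2 * 2 ^ (s iA - 1) := by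
    rw [← pow_succ']
    congr 1
    omega
  have hlt : 2 ^ s iB < 2 ^ (s iA - 1) := Nat.pow_lt_pow_right one_lt_two hB
  constructor <;> omega
end

section
/- In a complete multipartite graph G of order n, for a vertex a lying in a partite set A, the number of connected induced subgraphs of G containing a equals 1 + (2^{n - |A|} - 1) · 2^{|A| - 1}. -/
/-!
The complete multipartite graph with parts the fibres of `f` is `(⊤ : SimpleGraph ι).comap f`.
A set `S ∋ a` contained in the part `A` of `a` induces an edgeless graph, so it is connected only
when `S = {a}`; a set meeting another part contains an edge `bc` such that every vertex of `S` is
adjacent to `b` or to `c`, so it is connected. Hence the count is `1 + (2^(n-1) - 2^(|A|-1))`: the subsets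
containing `a` minus those inside `A`, plus `{a}`.
-/

open SimpleGraph

namespace Set

variable {α : Type*}

lemma setOf_mem_and_subset_eq_image_insert {P : Set α} {a : α} (ha : a ∈ P) :
    {S : Set α | a ∈ S ∧ S ⊆ P} = insert a '' 𝒫 (P \ {a}) := by
  ext S
  constructor
  · rintro ⟨haS, hSP⟩
    exact ⟨S \ {a}, sdiff_subset_sdiff_left hSP, insert_sdiff_self_of_mem haS⟩
  · rintro ⟨T, hT, rfl⟩
    exact ⟨mem_insert a T, insert_subset ha (hT.trans sdiff_subset)⟩

lemma ncard_setOf_mem_and_subset {P : Set α} (hP : P.Finite) {a : α} (ha : a ∈ P) :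
    {S : Set α | a ∈ S ∧ S ⊆ P}.ncard = 2 ^ (P.ncard - 1) := by
  rw [setOf_mem_and_subset_eq_image_insert ha,
    (powerset_insert_injOn fun h => h.2 rfl).ncard_image, ncard_powerset _ hP.sdiff,
    ncard_sdiff_singleton_of_mem ha]

end Set

namespace SimpleGraph

variable {V ι : Type*} (f : V → ι)

lemma induce_comap_top_eq_bot_of_subset_fiber {S : Set V} {i : ι} (hS : S ⊆ f ⁻¹' {i}) :
    ((⊤ : SimpleGraph ι).comap f).induce S = ⊥ := by
  ext x y
  have hx : f x = i := hS x.2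
  have hy : f y = i := hS y.2
  simp [hx, hy]

lemma induce_comap_top_connected_of_ne {S : Set V} {b c : V} (hb : b ∈ S) (hc : c ∈ S)
    (hbc : f b ≠ f c) : ((⊤ : SimpleGraph ι).comap f).induce S |>.Connected := by
  have hadj : ∀ x y : S, (((⊤ : SimpleGraph ι).comap f).induce S).Adj x y ↔ f x ≠ f y := by
    simp
  have hreach : ∀ x : S, (((⊤ : SimpleGraph ι).comap f).induce S).Reachable ⟨b, hb⟩ x := by
    intro x
    have hbc' : (((⊤ : SimpleGraph ι).comap f).induce S).Adj ⟨b, hb⟩ ⟨c, hc⟩ := (hadj _ _).2 hbc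
    by_cases hbx : f b = f x
    · exact hbc'.reachable.trans ((hadj _ _).2 fun h => hbc (hbx.trans h.symm)).reachable
    · exact ((hadj _ _).2 hbx).reachable
  exact (connected_iff_exists_forall_reachable _).2 ⟨_, hreach⟩

lemma induce_comap_top_connected_iff {S : Set V} {a : V} (ha : a ∈ S) :
    (((⊤ : SimpleGraph ι).comap f).induce S).Connected ↔
      S = {a} ∨ ¬ S ⊆ {x | f x = f a} := by
  by_cases hS : S ⊆ {x | f x = f a}
  · rw [induce_comap_top_eq_bot_of_subset_fiber f hS, connected_bot_iff, Set.subsingleton_coe]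
    simp only [hS, not_true_eq_false, or_false]
    exact ⟨fun h => h.1.eq_singleton_of_mem ha, fun h => h ▸ ⟨Set.subsingleton_singleton, ⟨⟨a, rfl⟩⟩⟩⟩
  · obtain ⟨b, hb, hba⟩ := Set.not_subset.1 hS
    exact iff_of_true (induce_comap_top_connected_of_ne f hb ha hba) (Or.inr hS)

lemma setOf_mem_induce_comap_top_connected_eq (a : V) :
    {S : Set V | a ∈ S ∧ (((⊤ : SimpleGraph ι).comap f).induce S).Connected} =
      insert {a} ({S | a ∈ S ∧ S ⊆ Set.univ} \ {S | a ∈ S ∧ S ⊆ {x | f x = f a}}) := by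
  ext S
  simp only [Set.mem_ofPred_eq, Set.mem_insert_iff, Set.mem_sdiff, Set.subset_univ, and_true,
    not_and]
  constructor
  · rintro ⟨haS, hS⟩
    exact ((induce_comap_top_connected_iff f haS).1 hS).imp_right fun h => ⟨haS, fun _ => h⟩
  · rintro (rfl | ⟨haS, hS⟩)
    · exact ⟨rfl, (induce_comap_top_connected_iff f (Set.mem_singleton a)).2 (Or.inl rfl)⟩
    · exact ⟨haS, (induce_comap_top_connected_iff f haS).2 (Or.inr (hS haS))⟩

lemma ncard_setOf_mem_induce_comap_top_connected [Finite V] (a : V) :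
    {S : Set V | a ∈ S ∧ (((⊤ : SimpleGraph ι).comap f).induce S).Connected}.ncard =
      1 + (2 ^ (Nat.card V - 1) - 2 ^ ({x | f x = f a}.ncard - 1)) := by
  have hsingleton : ({a} : Set V) ∈ {S | a ∈ S ∧ S ⊆ {x | f x = f a}} :=
    ⟨rfl, Set.singleton_subset_iff.2 rfl⟩
  rw [setOf_mem_induce_comap_top_connected_eq,
    Set.ncard_insert_of_notMem (fun h => h.2 hsingleton), add_comm,
    Set.ncard_sdiff (Set.ofPred_subset_ofPred.2 fun _ h => ⟨h.1, Set.subset_univ _⟩),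
    Set.ncard_setOf_mem_and_subset Set.finite_univ (Set.mem_univ a),
    Set.ncard_setOf_mem_and_subset (P := {x | f x = f a}) (Set.toFinite _) rfl, Set.ncard_univ]

end SimpleGraph

theorem numConnSubAt_completeMultipartite_general {V ι : Type*} [Fintype V]
    (f : V → ι) (G : SimpleGraph V) (hG : ∀ x y, G.Adj x y ↔ f x ≠ f y) (a : V) :
    numConnSubAt G a =
      1 + (2 ^ (Fintype.card V - {x | f x = f a}.ncard) - 1) *
        2 ^ ({x | f x = f a}.ncard - 1) := by
  obtain rfl : G = (⊤ : SimpleGraph ι).comap f := by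
    ext x y
    simp [hG]
  set p := {x | f x = f a}.ncard
  have hp : 1 ≤ p := Nat.one_le_iff_ne_zero.2 (Set.ncard_ne_zero_of_mem rfl)
  have hpn : p ≤ Fintype.card V := Nat.card_eq_fintype_card (α := V) ▸ Set.ncard_le_card _
  rw [numConnSubAt, ncard_setOf_mem_induce_comap_top_connected, Nat.card_eq_fintype_card,
    Nat.sub_one_mul, ← pow_add, Nat.sub_add_sub_cancel hpn hp]

/-- In a complete multipartite graph `G` (with parts given by the fibres of `f`), the number
of connected induced subgraphs containing a vertex `a` whose part is `A` equals
`1 + (2^(n - |A|) - 1) * 2^(|A| - 1)`. -/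
theorem numConnSubAt_completeMultipartite {V ι : Type*} [Fintype V] [DecidableEq ι]
    (f : V → ι) (G : SimpleGraph V) (hG : ∀ x y, G.Adj x y ↔ f x ≠ f y) (a : V) :
    numConnSubAt G a =
      1 + (2 ^ (Fintype.card V - {x | f x = f a}.ncard) - 1) *
        2 ^ ({x | f x = f a}.ncard - 1) :=
  numConnSubAt_completeMultipartite_general f G hG a
end

section
/- Let G be a graph of order n with chromatic number l, and let T_{n,l} be the Turán graph (the complete l-partite graph of order n whose part sizes differ by at most one). If G is not isomorphic to T_{n,l}, then N(G) < N(T_{n,l}). -/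
/-!
An `l`-colouring `c` of `G` exhibits `G` as a spanning subgraph of the complete multipartite
graph `⊤.comap c`, and adding edges can only create connected sets, strictly so for a missing
edge `uv` (the set `{u, v}`). In `⊤.comap c` a nonempty set fails to be connected exactly when
it is a monochromatic set with at least two elements, so with class sizes `aᵢ`
`N(⊤.comap c) = 2ⁿ + n + l - 1 - ∑ᵢ 2^aᵢ`. By convexity of `x ↦ 2ˣ`, the sum `∑ᵢ 2^aᵢ` with
`∑ᵢ aᵢ = n` is smallest exactly when all `aᵢ` lie in `{⌊n/l⌋, ⌊n/l⌋ + 1}`, as they do for the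
Turán graph; and a complete multipartite graph with such class sizes is isomorphic to `T_{n,l}`.
-/

open SimpleGraph

open scoped Function

section TwoPow

/-- The chord of `x ↦ 2 ^ x` through `m` and `m + 1` lies below it at every natural number and
meets it only at `m` and `m + 1`. -/
theorem two_pow_mul_succ_eq_of_eq_or_eq {m x : ℕ} (h : x = m ∨ x = m + 1) :
    2 ^ m * (x + 1) = 2 ^ x + m * 2 ^ m := by
  rcases h with rfl | rfl <;> ring

theorem two_pow_mul_succ_lt_of_ne_of_ne {m x : ℕ} (h : ¬ (x = m ∨ x = m + 1)) :
    2 ^ m * (x + 1) < 2 ^ x + m * 2 ^ m := by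
  rcases Nat.lt_or_ge x m with hx | hx
  · have : 2 ^ m * (x + 1) ≤ m * 2 ^ m := by rw [mul_comm]; gcongr; omega
    linarith [Nat.two_pow_pos x]
  · obtain ⟨k, rfl⟩ : ∃ k, x = m + k + 2 := ⟨x - m - 2, by omega⟩
    have hk : k + 3 < 2 ^ (k + 2) := by
      have := Nat.lt_two_pow_self (n := k)
      rw [pow_add]; omega
    calc 2 ^ m * (m + k + 2 + 1) = 2 ^ m * (k + 3) + m * 2 ^ m := by ring
      _ < 2 ^ m * 2 ^ (k + 2) + m * 2 ^ m := by gcongr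
      _ = 2 ^ (m + k + 2) + m * 2 ^ m := by ring

theorem two_pow_mul_succ_le (m x : ℕ) : 2 ^ m * (x + 1) ≤ 2 ^ x + m * 2 ^ m := by
  by_cases h : x = m ∨ x = m + 1
  · exact (two_pow_mul_succ_eq_of_eq_or_eq h).le
  · exact (two_pow_mul_succ_lt_of_ne_of_ne h).le

variable {ι : Type*} [Fintype ι] {f g : ι → ℕ} {m : ℕ}

theorem sum_two_pow_lt_of_forall_eq_or_eq (hg : ∀ i, g i = m ∨ g i = m + 1)
    (hfg : ∑ i, f i = ∑ i, g i) (hf : ∃ i, ¬ (f i = m ∨ f i = m + 1)) :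
    ∑ i, 2 ^ g i < ∑ i, 2 ^ f i := by
  obtain ⟨j, hj⟩ := hf
  have hf_lt : ∑ i, 2 ^ m * (f i + 1) < ∑ i, (2 ^ f i + m * 2 ^ m) :=
    Finset.sum_lt_sum (fun i _ => two_pow_mul_succ_le m (f i))
      ⟨j, Finset.mem_univ j, two_pow_mul_succ_lt_of_ne_of_ne hj⟩
  have hg_eq : ∑ i, 2 ^ m * (g i + 1) = ∑ i, (2 ^ g i + m * 2 ^ m) :=
    Finset.sum_congr rfl fun i _ => two_pow_mul_succ_eq_of_eq_or_eq (hg i)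
  have hchord : ∑ i, 2 ^ m * (f i + 1) = ∑ i, 2 ^ m * (g i + 1) := by
    simp only [← Finset.mul_sum, Finset.sum_add_distrib, hfg]
  rw [Finset.sum_add_distrib] at hf_lt hg_eq
  omega

theorem sum_eq_card_mul_add_card_of_forall_eq_or_eq (hf : ∀ i, f i = m ∨ f i = m + 1) :
    ∑ i, f i = Fintype.card ι * m + Fintype.card {i // f i = m + 1} := by
  rw [Fintype.card_subtype, Finset.card_filter, ← smul_eq_mul, ← Finset.card_univ,
    ← Finset.sum_const, ← Finset.sum_add_distrib]
  refine Finset.sum_congr rfl fun i _ => ?_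
  rcases hf i with h | h <;> simp [h]

theorem exists_perm_eq_comp_of_forall_eq_or_eq (hf : ∀ i, f i = m ∨ f i = m + 1)
    (hg : ∀ i, g i = m ∨ g i = m + 1) (hfg : ∑ i, f i = ∑ i, g i) :
    ∃ σ : Equiv.Perm ι, ∀ i, f i = g (σ i) := by
  have hlarge : Fintype.card {i // f i = m + 1} = Fintype.card {i // g i = m + 1} := by
    have := hfg
    rw [sum_eq_card_mul_add_card_of_forall_eq_or_eq hf,
      sum_eq_card_mul_add_card_of_forall_eq_or_eq hg] at this
    omega
  have hsmall : Fintype.card {i // ¬ f i = m + 1} = Fintype.card {i // ¬ g i = m + 1} := by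
    rw [Fintype.card_subtype_compl, Fintype.card_subtype_compl, hlarge]
  refine ⟨Equiv.subtypeCongr (Fintype.equivOfCardEq hlarge) (Fintype.equivOfCardEq hsmall),
    fun i => ?_⟩
  by_cases hi : f i = m + 1
  · simp only [Equiv.subtypeCongr, Equiv.trans_apply,
      Equiv.sumCompl_symm_apply_of_pos (p := fun x => f x = m + 1) hi,
      Equiv.sumCongr_apply, Sum.map_inl, Equiv.sumCompl_apply_inl]
    exact hi.trans (Fintype.equivOfCardEq hlarge ⟨i, hi⟩).2.symm
  · simp only [Equiv.subtypeCongr, Equiv.trans_apply,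
      Equiv.sumCompl_symm_apply_of_neg (p := fun x => f x = m + 1) hi,
      Equiv.sumCongr_apply, Sum.map_inr, Equiv.sumCompl_apply_inr]
    exact ((hf i).resolve_right hi).trans
      ((hg _).resolve_right (Fintype.equivOfCardEq hsmall ⟨i, hi⟩).2).symm

end TwoPow

section Fibers

variable {V ι : Type*} (c : V → ι)

theorem sum_ncard_preimage_singleton [Finite V] [Fintype ι] :
    ∑ i, (c ⁻¹' {i}).ncard = Nat.card V := by
  rw [← finsum_eq_sum_of_fintype, ← Set.ncard_iUnion_of_finite (fun _ => Set.toFinite _)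
      fun i j hij => Set.disjoint_left.mpr fun _ hi hj => hij (hi.symm.trans hj),
    Set.iUnion_eq_univ_iff.mpr fun v => ⟨c v, rfl⟩, Set.ncard_univ]

theorem ncard_nonempty_subset_preimage_add_card [Finite V] [Fintype ι] :
    {S : Set V | S.Nonempty ∧ ∃ i, S ⊆ c ⁻¹' {i}}.ncard + Fintype.card ι =
      ∑ i, 2 ^ (c ⁻¹' {i}).ncard := by
  have hunion : {S : Set V | S.Nonempty ∧ ∃ i, S ⊆ c ⁻¹' {i}} = ⋃ i, 𝒫 (c ⁻¹' {i}) \ {∅} := by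
    ext S
    simp [Set.nonempty_iff_ne_empty, and_comm]
  have hdisj : Pairwise (Disjoint on fun i => 𝒫 (c ⁻¹' {i}) \ {∅}) := by
    intro i j hij
    refine Set.disjoint_left.mpr fun S ⟨hi, hSi⟩ ⟨hj, _⟩ => ?_
    obtain ⟨u, hu⟩ := Set.nonempty_iff_ne_empty.mpr hSi
    exact hij ((hi hu).symm.trans (hj hu))
  rw [hunion, Set.ncard_iUnion_of_finite (fun _ => Set.toFinite _) hdisj,
    finsum_eq_sum_of_fintype, ← Finset.card_univ, Finset.card_eq_sum_ones,
    ← Finset.sum_add_distrib]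
  refine Finset.sum_congr rfl fun i _ => ?_
  rw [Set.ncard_sdiff_singleton_add_one (Set.mem_powerset (Set.empty_subset _)),
    Set.ncard_powerset]

theorem ncard_preimage_fin_ofNat (n l : ℕ) [NeZero l] (i : Fin l) :
    ((fun x : Fin n => Fin.ofNat l x) ⁻¹' {i}).ncard =
      n / l + if (i : ℕ) < n % l then 1 else 0 := by
  have hcount := Nat.count_modEq_card n (NeZero.pos l) i
  rw [Nat.mod_eq_of_lt i.isLt] at hcount
  rw [← hcount, Nat.count_eq_card_fintype, Fintype.card_eq_nat_card, ← Nat.card_coe_set_eq]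
  have hmem : ∀ x : Fin n, Fin.ofNat l x = i ↔ (x : ℕ) ≡ i [MOD l] := fun x => by
    rw [Fin.ext_iff, Fin.val_ofNat, Nat.ModEq, Nat.mod_eq_of_lt i.isLt]
  exact Nat.card_congr ⟨fun x => ⟨x.1, x.1.2, (hmem x).mp x.2⟩,
    fun k => ⟨⟨k.1, k.2.1⟩, (hmem ⟨k.1, k.2.1⟩).mpr k.2.2⟩, fun _ => rfl, fun _ => rfl⟩

end Fibers

namespace SimpleGraph

theorem IsIndepSet.subsingleton_of_connected_induce {V : Type*} {G : SimpleGraph V} {S : Set V}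
    (hS : G.IsIndepSet S) (hc : (G.induce S).Connected) : S.Subsingleton := by
  have hbot : G.induce S = ⊥ := by
    ext ⟨x, hx⟩ ⟨y, hy⟩
    simpa using fun h => hS hx hy (G.ne_of_adj h) h
  rw [hbot, connected_bot_iff] at hc
  exact (Set.subsingleton_coe S).mp hc.1

theorem connected_induce_pair_iff {V : Type*} {G : SimpleGraph V} {u v : V} (huv : u ≠ v) :
    (G.induce {u, v}).Connected ↔ G.Adj u v := by
  refine ⟨fun hc => ?_, induce_pair_connected_of_adj⟩
  by_contra hnadj
  have hS : G.IsIndepSet {u, v} :=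
    Set.pairwise_pair.mpr fun _ => ⟨hnadj, fun h => hnadj h.symm⟩
  exact huv (hS.subsingleton_of_connected_induce hc (by simp) (by simp))

section CompleteMultipartite

variable {V ι : Type*} (c : V → ι)

theorem isIndepSet_comap_top_of_subset_preimage {S : Set V} {i : ι} (hS : S ⊆ c ⁻¹' {i}) :
    ((⊤ : SimpleGraph ι).comap c).IsIndepSet S :=
  fun _ hx _ hy _ hne => hne ((hS hx).trans (hS hy).symm)

theorem connected_induce_comap_top_of_ne {S : Set V} {u v : V} (hu : u ∈ S) (hv : v ∈ S)
    (huv : c u ≠ c v) : (((⊤ : SimpleGraph ι).comap c).induce S).Connected := by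
  have hreach : ∀ x y : S, c x ≠ c y → (((⊤ : SimpleGraph ι).comap c).induce S).Reachable x y :=
    fun x y h => Adj.reachable h
  refine (connected_iff _).mpr ⟨fun x y => ?_, ⟨⟨u, hu⟩⟩⟩
  by_cases hxy : c x = c y
  · obtain ⟨w, hw⟩ : ∃ w : S, c w ≠ c x := by
      by_cases hux : c u = c x
      · exact ⟨⟨v, hv⟩, fun h => huv (hux.trans h.symm)⟩
      · exact ⟨⟨u, hu⟩, hux⟩
    exact (hreach x w (Ne.symm hw)).trans (hreach w y (hxy ▸ hw))
  · exact hreach x y hxy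

theorem nonempty_iso_comap_top {W : Type*} [Finite V] [Finite W] (d : W → ι)
    (σ : Equiv.Perm ι) (h : ∀ i, (c ⁻¹' {i}).ncard = (d ⁻¹' {σ i}).ncard) :
    Nonempty ((⊤ : SimpleGraph ι).comap c ≃g (⊤ : SimpleGraph ι).comap d) := by
  have hfiber : ∀ i, Nonempty ({v // c v = i} ≃ {w // σ.symm (d w) = i}) := fun i =>
    Finite.card_eq.mp <| (h i).trans <|
      Nat.card_congr (Equiv.subtypeEquivRight fun _ => (σ.symm_apply_eq).symm)
  let e := Equiv.ofFiberEquiv fun i => (hfiber i).some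
  have he : ∀ v, σ.symm (d (e v)) = c v := Equiv.ofFiberEquiv_map (g := fun w => σ.symm (d w)) _
  refine ⟨⟨e, fun {u v} => ?_⟩⟩
  simp only [comap_adj, top_adj, ← he u, ← he v, ne_eq, EmbeddingLike.apply_eq_iff_eq]

end CompleteMultipartite

theorem turanGraph_eq_comap_top (n l : ℕ) [NeZero l] :
    turanGraph n l = (⊤ : SimpleGraph (Fin l)).comap (fun x : Fin n => Fin.ofNat l x) := by
  ext v w
  simp [turanGraph_adj, Fin.ext_iff]

end SimpleGraph

section NumConnSub

variable {V : Type*} [Fintype V]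

theorem numConnSub_mono {G H : SimpleGraph V} (h : G ≤ H) : numConnSub G ≤ numConnSub H :=
  Set.ncard_le_ncard (fun _ ⟨hne, hc⟩ => ⟨hne, hc.mono fun _ _ hab => h hab⟩)

theorem numConnSub_lt_numConnSub {G H : SimpleGraph V} (h : G < H) :
    numConnSub G < numConnSub H := by
  obtain ⟨u, v, hH, hG⟩ : ∃ u v, H.Adj u v ∧ ¬ G.Adj u v := by
    by_contra! hle
    exact h.not_ge fun u v => hle u v
  refine Set.ncard_lt_ncard ((Set.ssubset_iff_of_subset ?_).mpr ⟨{u, v}, ?_, ?_⟩)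
  · exact fun _ ⟨hne, hc⟩ => ⟨hne, hc.mono fun _ _ hab => h.le hab⟩
  · exact ⟨by simp, induce_pair_connected_of_adj hH⟩
  · exact fun ⟨_, hc⟩ => hG ((connected_induce_pair_iff hH.ne).mp hc)

/-- Inclusion–exclusion: the nonempty sets are the connected ones together with the nonempty
monochromatic ones, and a set is both exactly when it is a singleton. -/
theorem numConnSub_comap_top_add_sum {ι : Type*} [Fintype ι] (c : V → ι) :
    numConnSub ((⊤ : SimpleGraph ι).comap c) + ∑ i, 2 ^ (c ⁻¹' {i}).ncard + 1 =
      2 ^ Fintype.card V + Fintype.card V + Fintype.card ι := by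
  have hmono_card := ncard_nonempty_subset_preimage_add_card c
  set conn := {S : Set V | S.Nonempty ∧ (((⊤ : SimpleGraph ι).comap c).induce S).Connected}
  set mono := {S : Set V | S.Nonempty ∧ ∃ i, S ⊆ c ⁻¹' {i}}
  have hunion : conn ∪ mono = {∅}ᶜ := by
    ext S
    simp only [Set.mem_union, Set.mem_ofPred_eq, Set.mem_compl_singleton_iff,
      ← Set.nonempty_iff_ne_empty, conn, mono]
    refine ⟨fun h => h.elim And.left And.left, fun ⟨u, hu⟩ => ?_⟩
    by_cases hmono : ∀ v ∈ S, c v = c u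
    · exact Or.inr ⟨⟨u, hu⟩, c u, hmono⟩
    · push Not at hmono
      obtain ⟨v, hv, hvu⟩ := hmono
      exact Or.inl ⟨⟨u, hu⟩, connected_induce_comap_top_of_ne c hu hv hvu.symm⟩
  have hinter : conn ∩ mono = Set.range ({·}) := by
    ext S
    simp only [Set.mem_inter_iff, Set.mem_ofPred_eq, Set.mem_range, conn, mono]
    constructor
    · rintro ⟨⟨⟨u, hu⟩, hc⟩, -, i, hi⟩
      exact ⟨u, ((isIndepSet_comap_top_of_subset_preimage c hi).subsingleton_of_connected_induce
        hc).eq_singleton_of_mem hu |>.symm⟩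
    · rintro ⟨u, rfl⟩
      exact ⟨⟨Set.singleton_nonempty u, Connected.of_subsingleton⟩, Set.singleton_nonempty u,
        c u, by simp⟩
  have hnonempty : ({∅}ᶜ : Set (Set V)).ncard + 1 = 2 ^ Fintype.card V := by
    rw [← Set.ncard_singleton (∅ : Set V), add_comm, Set.ncard_add_ncard_compl,
      Nat.card_eq_fintype_card, Fintype.card_set]
  have hsingleton : (Set.range ({·} : V → Set V)).ncard = Fintype.card V := by
    rw [Set.ncard_range_of_injective Set.singleton_injective, Nat.card_eq_fintype_card]
  have := Set.ncard_union_add_ncard_inter conn mono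
  rw [hunion, hinter, hsingleton] at this
  change conn.ncard + _ + 1 = _
  omega

theorem numConnSub_lt_turanGraph_of_le_comap_top {n l : ℕ} [NeZero l] {G : SimpleGraph V}
    (c : V → Fin l) (hn : Fintype.card V = n) (hGc : G ≤ (⊤ : SimpleGraph (Fin l)).comap c)
    (hiso : IsEmpty (G ≃g turanGraph n l)) : numConnSub G < numConnSub (turanGraph n l) := by
  set t : Fin n → Fin l := fun x => Fin.ofNat l x
  have hT := numConnSub_comap_top_add_sum t
  rw [← turanGraph_eq_comap_top, Fintype.card_fin] at hT
  have hH := numConnSub_comap_top_add_sum c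
  rw [hn] at hH
  have hsum : ∑ i, (c ⁻¹' {i}).ncard = ∑ i, (t ⁻¹' {i}).ncard := by
    simp [sum_ncard_preimage_singleton, hn]
  have hbal_t : ∀ i, (t ⁻¹' {i}).ncard = n / l ∨ (t ⁻¹' {i}).ncard = n / l + 1 := fun i => by
    rw [ncard_preimage_fin_ofNat]; split_ifs <;> simp
  by_cases hbal : ∀ i, (c ⁻¹' {i}).ncard = n / l ∨ (c ⁻¹' {i}).ncard = n / l + 1
  · obtain ⟨σ, hσ⟩ := exists_perm_eq_comp_of_forall_eq_or_eq hbal hbal_t hsum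
    have hlt : G < (⊤ : SimpleGraph (Fin l)).comap c := by
      refine lt_of_le_of_ne hGc fun hG => ?_
      rw [hG, turanGraph_eq_comap_top] at hiso
      exact (nonempty_iso_comap_top c t σ hσ).elim hiso.false
    have : ∑ i, 2 ^ (c ⁻¹' {i}).ncard = ∑ i, 2 ^ (t ⁻¹' {i}).ncard :=
      Fintype.sum_equiv σ _ _ fun i => by rw [hσ]
    have := numConnSub_lt_numConnSub hlt
    omega
  · have := sum_two_pow_lt_of_forall_eq_or_eq hbal_t hsum (not_forall.mp hbal)
    have := numConnSub_mono hGc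
    omega

theorem numConnSub_lt_turanGraph_of_colorable {n l : ℕ} {G : SimpleGraph V}
    (hn : Fintype.card V = n) (hG : G.Colorable l) (hiso : IsEmpty (G ≃g turanGraph n l)) :
    numConnSub G < numConnSub (turanGraph n l) := by
  obtain ⟨C⟩ := hG
  obtain rfl | hl := Nat.eq_zero_or_pos l
  · have : IsEmpty V := colorable_zero_iff.mp ⟨C⟩
    obtain rfl : n = 0 := hn ▸ Fintype.card_eq_zero
    exact (hiso.false ⟨Equiv.equivOfIsEmpty V (Fin 0), fun {a} => isEmptyElim a⟩).elim
  have : NeZero l := ⟨hl.ne'⟩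
  exact numConnSub_lt_turanGraph_of_le_comap_top C hn C.le_comap hiso

end NumConnSub

/-- Among graphs of order `n` with chromatic number `l`, the Turán graph `T_{n,l}` is the
unique maximiser of the number of connected induced subgraphs. -/
theorem numConnSub_lt_of_chromaticNumber {V : Type*} [Fintype V] (G : SimpleGraph V)
    (n l : ℕ) (hn : Fintype.card V = n) (hχ : G.chromaticNumber = (l : ℕ∞))
    (hiso : IsEmpty (G ≃g SimpleGraph.turanGraph n l)) :
    numConnSub G < numConnSub (SimpleGraph.turanGraph n l) :=
  numConnSub_lt_turanGraph_of_colorable hn (chromaticNumber_le_iff_colorable.mp hχ.le) hiso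
end
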